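/- arXiv:2207.12828 — 2 statements merged into one kernel-verified Lean document; each statement's English description precedes it below -/
import Mathlib

section
/- Assume the Carlson–Simpson Lemma for all finite alphabets and numbers of colors: for every finite alphabet A and finite coloring of A^{<ω}, there is an ω-variable word W over A with {W[u] : u ∈ A^{<ω}} monochromatic. Then for every finite alphabet A, every ω-variable word W over A, every n, and every finite coloring f of the n+1-variable words, and every n-variable word s, there exists an ω-variable word Ŵ with Ŵ = W[V] for some ω-variable word V extending x₀⋯x_{|s|}, and a color i, such that for every (n+1)-variable word t having s⌢x_n as a prefix, f(Ŵ[t]) = i. -/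
/-- `W : ℕ → A ⊕ ℕ` (with `Sum.inl a` a letter and `Sum.inr j` the variable `x_j`)
is an ω-variable word over `A`, with `fo j` the first occurrence of `x_j`:
each variable occurs, `fo j` is its first occurrence, and first occurrences
are in increasing order of variable index. -/
def IsOmegaVW {A : Type*} (W : ℕ → A ⊕ ℕ) (fo : ℕ → ℕ) : Prop :=
  (∀ j, W (fo j) = Sum.inr j) ∧ (∀ j i, i < fo j → W i ≠ Sum.inr j) ∧
    (∀ j, fo j < fo (j + 1))

/-- `w` is an `n`-variable word over `A`: exactly the variables `x_j`, `j < n`,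
occur, each at least once, and the first occurrence of `x_{j+1}` is preceded by an
occurrence of `x_j` (so first occurrences are in increasing order of index). -/
def IsNVarWord {A : Type*} (n : ℕ) (w : List (A ⊕ ℕ)) : Prop :=
  (∀ j : ℕ, Sum.inr j ∈ w → j < n) ∧ (∀ j < n, Sum.inr j ∈ w) ∧
    (∀ i < w.length, ∀ j : ℕ, w[i]? = some (Sum.inr (j + 1)) →
      ∃ i' < i, w[i']? = some (Sum.inr j))

/-- The substitution `W[u]` of a finite (variable) word `u` into an ω-variable
word `W`: replace each occurrence of `x_j` (`j < |u|`) by `u(j)` and truncate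
just before the first occurrence of `x_{|u|}`. -/
def substW {A : Type*} (W : ℕ → A ⊕ ℕ) (fo : ℕ → ℕ) (u : List (A ⊕ ℕ)) :
    List (A ⊕ ℕ) :=
  (List.range (fo u.length)).map (fun i =>
    match W i with
    | Sum.inl a => Sum.inl a
    | Sum.inr j => u.getD j (Sum.inr j))

/-!
Put `P = s ⌢ x_n` and `m = |P|`. Apply the Carlson–Simpson lemma to the alphabet `A ⊕ Fin m`,
where the letter `k` is decoded as the `k`-th symbol of `P`, and to the coloring
`w ↦ f (W[P ⌢ w])` of decoded words; it yields `U` with all `U[u]` of one color `i`.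
Let `V = x₀ ⋯ x_{m-1} ⌢ U`, the letter `k` of `U` read as `x_k` and its variables shifted by `m`.
Every variable of an `(n+1)`-variable word `t = P ⌢ r` occurs in `P`, so `r` is the decoding
of a word `u` over `A ⊕ Fin m`, and then `V[t]` is `P ⌢ U[u]` decoded. Hence
`W[V][t] = W[V[t]]` has color `i`.
-/

open Sum

section Substitution

variable {A : Type*}

def substLetter (u : List (A ⊕ ℕ)) : A ⊕ ℕ → A ⊕ ℕ
  | inl a => inl a
  | inr j => u.getD j (inr j)

/-- The composition `W[V]` of the paper. -/
def compW (W V : ℕ → A ⊕ ℕ) (p : ℕ) : A ⊕ ℕ :=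
  match W p with
  | inl a => inl a
  | inr j => V j

lemma substW_length (W : ℕ → A ⊕ ℕ) (fo : ℕ → ℕ) (u : List (A ⊕ ℕ)) :
    (substW W fo u).length = fo u.length := by
  simp [substW]

lemma substW_getElem (W : ℕ → A ⊕ ℕ) (fo : ℕ → ℕ) (u : List (A ⊕ ℕ)) (p : ℕ)
    (hp : p < (substW W fo u).length) :
    (substW W fo u)[p] = substLetter u (W p) := by
  simp only [substW, List.getElem_map, List.getElem_range]
  cases W p <;> rfl

lemma IsOmegaVW.strictMono {W : ℕ → A ⊕ ℕ} {fo : ℕ → ℕ} (hW : IsOmegaVW W fo) :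
    StrictMono fo :=
  strictMono_nat_of_lt_succ hW.2.2

lemma IsOmegaVW.fo_le {W : ℕ → A ⊕ ℕ} {fo : ℕ → ℕ} (hW : IsOmegaVW W fo) {i j : ℕ}
    (h : W i = inr j) : fo j ≤ i :=
  le_of_not_gt fun hlt => hW.2.1 j i hlt h

lemma IsOmegaVW.lt_of_lt_fo {W : ℕ → A ⊕ ℕ} {fo : ℕ → ℕ} (hW : IsOmegaVW W fo)
    {i j k : ℕ} (h : W i = inr j) (hi : i < fo k) : j < k :=
  hW.strictMono.lt_iff_lt.mp ((hW.fo_le h).trans_lt hi)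

lemma IsOmegaVW.comp {W V : ℕ → A ⊕ ℕ} {fo foV : ℕ → ℕ} (hW : IsOmegaVW W fo)
    (hV : IsOmegaVW V foV) : IsOmegaVW (compW W V) (fo ∘ foV) := by
  refine ⟨fun k => ?_, fun k p hp hpk => ?_, fun k => hW.strictMono (hV.2.2 k)⟩
  · simp [compW, hW.1 (foV k), hV.1 k]
  · rcases hWp : W p with a | j
    · simp [compW, hWp] at hpk
    · have hj : foV k ≤ j := hV.fo_le (by simpa [compW, hWp] using hpk)
      exact (hW.lt_of_lt_fo hWp hp).not_ge hj

lemma substW_compW {W : ℕ → A ⊕ ℕ} {fo : ℕ → ℕ} (hW : IsOmegaVW W fo) (V : ℕ → A ⊕ ℕ)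
    (foV : ℕ → ℕ) (t : List (A ⊕ ℕ)) :
    substW (compW W V) (fo ∘ foV) t = substW W fo (substW V foV t) := by
  refine List.ext_getElem (by simp [substW_length]) fun p h₁ h₂ => ?_
  rw [substW_getElem, substW_getElem]
  rcases hWp : W p with a | j
  · simp [compW, substLetter, hWp]
  · have hj : j < (substW V foV t).length := by
      rw [substW_length] at h₁ ⊢
      exact hW.lt_of_lt_fo hWp h₁
    rw [show compW W V p = V j by simp [compW, hWp], substLetter,
      List.getD_eq_getElem _ _ hj, substW_getElem]

end Substitution

section Shift

variable {A : Type*} {m : ℕ}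

/-- Reads a symbol over the alphabet `A ⊕ Fin m` as one over `A`: the letter `k : Fin m`
stands for the variable `x_k`, and the variable `x_j` becomes `x_{m+j}`. -/
def shiftLetter (m : ℕ) : (A ⊕ Fin m) ⊕ ℕ → A ⊕ ℕ
  | inl (inl a) => inl a
  | inl (inr k) => inr k
  | inr j => inr (m + j)

def shiftW (m : ℕ) (U : ℕ → (A ⊕ Fin m) ⊕ ℕ) (p : ℕ) : A ⊕ ℕ :=
  if p < m then inr p else shiftLetter m (U (p - m))

def shiftFo (m : ℕ) (foU : ℕ → ℕ) (k : ℕ) : ℕ :=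
  if k < m then k else m + foU (k - m)

lemma shiftW_of_lt (U : ℕ → (A ⊕ Fin m) ⊕ ℕ) {p : ℕ} (hp : p < m) : shiftW m U p = inr p :=
  if_pos hp

lemma shiftW_add (U : ℕ → (A ⊕ Fin m) ⊕ ℕ) (p : ℕ) :
    shiftW m U (m + p) = shiftLetter m (U p) := by
  simp [shiftW]

lemma shiftFo_of_lt (foU : ℕ → ℕ) {k : ℕ} (hk : k < m) : shiftFo m foU k = k :=
  if_pos hk

lemma shiftFo_add (foU : ℕ → ℕ) (k : ℕ) : shiftFo m foU (m + k) = m + foU k := by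
  simp [shiftFo]

lemma shiftLetter_eq_inr_add {x : (A ⊕ Fin m) ⊕ ℕ} {j : ℕ}
    (h : shiftLetter m x = inr (m + j)) : x = inr j := by
  rcases x with (a | k) | i
  · simp [shiftLetter] at h
  · simp only [shiftLetter, inr.injEq] at h
    omega
  · simpa [shiftLetter] using h

lemma IsOmegaVW.shiftW {U : ℕ → (A ⊕ Fin m) ⊕ ℕ} {foU : ℕ → ℕ} (hU : IsOmegaVW U foU) :
    IsOmegaVW (shiftW m U) (shiftFo m foU) := by
  refine ⟨fun k => ?_, fun k p hp hpk => ?_, fun k => ?_⟩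
  · rcases lt_or_ge k m with hk | hk
    · rw [shiftFo_of_lt _ hk, shiftW_of_lt _ hk]
    · obtain ⟨k, rfl⟩ := Nat.exists_eq_add_of_le hk
      rw [shiftFo_add, shiftW_add, hU.1, shiftLetter]
  · rcases lt_or_ge k m with hk | hk
    · rw [shiftFo_of_lt _ hk] at hp
      rw [shiftW_of_lt _ (hp.trans hk), inr.injEq] at hpk
      omega
    · obtain ⟨k, rfl⟩ := Nat.exists_eq_add_of_le hk
      rw [shiftFo_add] at hp
      rcases lt_or_ge p m with hpm | hpm
      · rw [shiftW_of_lt _ hpm, inr.injEq] at hpk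
        omega
      · obtain ⟨p, rfl⟩ := Nat.exists_eq_add_of_le hpm
        rw [shiftW_add] at hpk
        exact hU.2.1 k p (by omega) (shiftLetter_eq_inr_add hpk)
  · rcases lt_or_ge (k + 1) m with hk | hk
    · rw [shiftFo_of_lt _ hk, shiftFo_of_lt _ (by omega)]
      omega
    · rcases lt_or_ge k m with hk' | hk'
      · rw [shiftFo_of_lt _ hk', show k + 1 = m + 0 by omega, shiftFo_add]
        omega
      · obtain ⟨k, rfl⟩ := Nat.exists_eq_add_of_le hk'
        rw [shiftFo_add, add_assoc, shiftFo_add]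
        exact Nat.add_lt_add_left (hU.2.2 k) m

lemma substLetter_append_shiftLetter {P : List (A ⊕ ℕ)} (hP : P.length = m)
    (u : List (A ⊕ Fin m)) {x : (A ⊕ Fin m) ⊕ ℕ} (hx : ∀ j, x = inr j → j < u.length) :
    substLetter (P ++ u.map (substLetter P ∘ shiftLetter m ∘ inl)) (shiftLetter m x) =
      substLetter P (shiftLetter m (substLetter (u.map inl) x)) := by
  rcases x with (a | k) | j
  · rfl
  · simp only [shiftLetter, substLetter]
    rw [List.getD_append _ _ _ _ (by omega)]
  · have hj := hx j rfl
    simp only [shiftLetter, substLetter]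
    rw [List.getD_append_right _ _ _ _ (by omega), hP, Nat.add_sub_cancel_left,
      List.getD_eq_getElem _ _ (by simpa using hj), List.getD_eq_getElem _ _ (by simpa using hj),
      List.getElem_map, List.getElem_map]
    rfl

lemma substW_shiftW {U : ℕ → (A ⊕ Fin m) ⊕ ℕ} {foU : ℕ → ℕ} (hU : IsOmegaVW U foU)
    {P : List (A ⊕ ℕ)} (hP : P.length = m) (u : List (A ⊕ Fin m)) :
    substW (shiftW m U) (shiftFo m foU) (P ++ u.map (substLetter P ∘ shiftLetter m ∘ inl)) =
      P ++ (substW U foU (u.map inl)).map (substLetter P ∘ shiftLetter m) := by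
  refine List.ext_getElem (by simp [substW_length, hP, shiftFo_add]) fun p h₁ h₂ => ?_
  rw [substW_getElem]
  rcases lt_or_ge p m with hpm | hpm
  · rw [shiftW_of_lt _ hpm, List.getElem_append_left (by omega), substLetter,
      List.getD_append _ _ _ _ (by omega), List.getD_eq_getElem]
  · obtain ⟨p, rfl⟩ := Nat.exists_eq_add_of_le hpm
    rw [shiftW_add, List.getElem_append_right (by omega), List.getElem_map]
    simp only [hP, Nat.add_sub_cancel_left, substW_getElem, Function.comp_apply]
    exact substLetter_append_shiftLetter hP u fun j hj =>
      hU.lt_of_lt_fo hj (by simpa [substW_length, hP] using h₂)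

lemma exists_map_shiftLetter_eq {P r : List (A ⊕ ℕ)} (h : ∀ j, inr j ∈ r → inr j ∈ P) :
    ∃ u : List (A ⊕ Fin P.length), u.map (substLetter P ∘ shiftLetter P.length ∘ inl) = r := by
  suffices r ∈ Set.range (List.map (substLetter P ∘ shiftLetter P.length ∘ inl)) from this
  rw [Set.range_list_map]
  rintro (a | j) hx
  · exact ⟨inl a, rfl⟩
  · obtain ⟨k, hk, hkj⟩ := List.getElem_of_mem (h j hx)
    exact ⟨inr ⟨k, hk⟩, by simp [shiftLetter, substLetter, List.getElem?_eq_getElem hk, hkj]⟩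

end Shift

lemma IsNVarWord.var_mem_append_var {A : Type*} {n : ℕ} {s : List (A ⊕ ℕ)}
    (hs : IsNVarWord n s) {j : ℕ} (hj : j ≤ n) : inr j ∈ s ++ [inr n] := by
  rcases hj.lt_or_eq with hj | rfl
  · exact List.mem_append_left _ (hs.2.1 j hj)
  · exact List.mem_append_right _ (List.mem_singleton_self _)

theorem stmt_12 {A : Type} [Fintype A]
    (csl : ∀ (B : Type) [Fintype B], ∀ (ℓ : ℕ) (c : List (B ⊕ ℕ) → Fin ℓ),
      ∃ (W : ℕ → B ⊕ ℕ) (fo : ℕ → ℕ), IsOmegaVW W fo ∧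
        ∃ i : Fin ℓ, ∀ u : List B, c (substW W fo (u.map Sum.inl)) = i)
    (W : ℕ → A ⊕ ℕ) (fo : ℕ → ℕ) (hW : IsOmegaVW W fo)
    (n ℓ : ℕ) (f : List (A ⊕ ℕ) → Fin ℓ)
    (s : List (A ⊕ ℕ)) (hs : IsNVarWord n s) :
    ∃ (V : ℕ → A ⊕ ℕ) (foV : ℕ → ℕ) (Wh : ℕ → A ⊕ ℕ) (foWh : ℕ → ℕ),
      IsOmegaVW V foV ∧ (∀ j ≤ s.length, V j = Sum.inr j) ∧
      IsOmegaVW Wh foWh ∧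
      (∀ i, Wh i = match W i with
        | Sum.inl a => Sum.inl a
        | Sum.inr j => V j) ∧
      ∃ i : Fin ℓ, ∀ t : List (A ⊕ ℕ), IsNVarWord (n + 1) t →
        (s ++ [Sum.inr n]) <+: t → f (substW Wh foWh t) = i := by
  set P := s ++ [inr n]
  obtain ⟨U, foU, hU, i, hi⟩ := csl (A ⊕ Fin P.length) ℓ fun w =>
    f (substW W fo (P ++ w.map (substLetter P ∘ shiftLetter P.length)))
  refine ⟨shiftW P.length U, shiftFo P.length foU, compW W (shiftW P.length U),
    fo ∘ shiftFo P.length foU, hU.shiftW, fun j hj => shiftW_of_lt U (by simp [P]; omega),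
    hW.comp hU.shiftW, fun _ => rfl, i, ?_⟩
  rintro t ht ⟨r, rfl⟩
  obtain ⟨u, rfl⟩ := exists_map_shiftLetter_eq (P := P) (r := r) fun j hj =>
    hs.var_mem_append_var (Nat.lt_succ_iff.mp (ht.1 j (List.mem_append_right _ hj)))
  rw [substW_compW hW, substW_shiftW hU rfl]
  exact hi u
end

section
/- The Combinatorial Dual Ramsey theorem for all dimensions implies the Higher-order Carlson–Simpson Lemma for all parameters: if for all n, ℓ ≥ 2, every ℓ-coloring of the (n−1)-variable words over the empty alphabet admits a monochromatic set {W[u] : u an (n−1)-variable word} for some ω-variable word W over ∅, then for all n, k, ℓ, every ℓ-coloring of the n-variable words over a k-letter alphabet A admits an ω-variable word W over A with {W[u] : u ∈ A^{<ω,n}} monochromatic. -/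
/-- `u` is an `m`-variable word over the empty alphabet: a list of variable
indices in which exactly the indices `j < m` occur, each at least once, with the
first occurrence of `j+1` preceded by an occurrence of `j`. -/
def IsMVarWordE (m : ℕ) (u : List ℕ) : Prop :=
  (∀ j ∈ u, j < m) ∧ (∀ j < m, j ∈ u) ∧
    (∀ i < u.length, ∀ j : ℕ, u[i]? = some (j + 1) → ∃ i' < i, u[i']? = some j)

/-- `W : ℕ → ℕ` is an ω-variable word over the empty alphabet, with `fo j`
the first occurrence of the variable `x_j`, first occurrences being ordered. -/
def IsOmegaVWE (W : ℕ → ℕ) (fo : ℕ → ℕ) : Prop :=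
  (∀ j, W (fo j) = j) ∧ (∀ j i, i < fo j → W i ≠ j) ∧ (∀ j, fo j < fo (j + 1))

/-- Substitution over the empty alphabet: replace each occurrence of `x_j`
(`j < |u|`) by `u(j)` and truncate just before the first occurrence of `x_{|u|}`. -/
def substE (W : ℕ → ℕ) (fo : ℕ → ℕ) (u : List ℕ) : List ℕ :=
  (List.range (fo u.length)).map (fun i => u.getD (W i) (W i))

def DualRamseyProperty (n ℓ : ℕ) : Prop :=
  ∀ c : List ℕ → Fin ℓ, ∃ (W : ℕ → ℕ) (fo : ℕ → ℕ), IsOmegaVWE W fo ∧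
    ∃ i : Fin ℓ, ∀ u : List ℕ, IsMVarWordE (n - 1) u → c (substE W fo u) = i

/-- If the monochromatic color in `Fin m` lies outside `Fin ℓ`, the family is empty and any
color, say that of `[]`, will do. -/
theorem DualRamseyProperty.of_le {n ℓ m : ℕ} (h : DualRamseyProperty n m) (hℓ : ℓ ≤ m) :
    DualRamseyProperty n ℓ := by
  intro c
  obtain ⟨W, fo, hW, i, hi⟩ := h (Fin.castLE hℓ ∘ c)
  refine ⟨W, fo, hW, if hiℓ : (i : ℕ) < ℓ then ⟨i, hiℓ⟩ else c [], fun u hu => ?_⟩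
  have hcu := hi u hu
  have hiℓ : (i : ℕ) < ℓ := hcu ▸ (c (substE W fo u)).isLt
  have hval : (c (substE W fo u) : ℕ) = i := congrArg Fin.val hcu
  rw [dif_pos hiℓ]
  exact Fin.ext hval

theorem isOmegaVW_inr {A : Type*} : IsOmegaVW (Sum.inr : ℕ → A ⊕ ℕ) id :=
  ⟨fun _ => rfl, fun _ _ hlt heq => hlt.ne (Sum.inr_injective heq), fun j => j.lt_succ_self⟩

theorem eq_nil_of_isNVarWord_zero {A : Type*} [IsEmpty A] {u : List (A ⊕ ℕ)}
    (hu : IsNVarWord 0 u) : u = [] := by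
  rcases u with _ | ⟨_ | j, _⟩
  · rfl
  · exact isEmptyElim ‹A›
  · exact absurd (hu.1 j List.mem_cons_self) (Nat.not_lt_zero j)

section LettersAsVariables

variable {A : Type*} {k : ℕ} (e : A ≃ Fin k)

def varToLetter (j : ℕ) : A ⊕ ℕ :=
  if h : j < k then Sum.inl (e.symm ⟨j, h⟩) else Sum.inr (j - k)

def letterToVar : A ⊕ ℕ → ℕ :=
  Sum.elim (fun a => e a) (· + k)

@[simp]
theorem varToLetter_letterToVar (s : A ⊕ ℕ) : varToLetter e (letterToVar e s) = s := by
  cases s with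
  | inl a => simp [varToLetter, letterToVar]
  | inr j => simp [varToLetter, letterToVar]

theorem varToLetter_eq_inr_iff {m j : ℕ} : varToLetter e m = Sum.inr j ↔ m = j + k := by
  unfold varToLetter
  split_ifs with hm
  · simp only [false_iff]
    omega
  · rw [Sum.inr.injEq]
    omega

theorem letterToVar_eq_add_iff {s : A ⊕ ℕ} {j : ℕ} :
    letterToVar e s = j + k ↔ s = Sum.inr j := by
  rw [← varToLetter_eq_inr_iff, varToLetter_letterToVar]

def lettersAsVars (u : List (A ⊕ ℕ)) : List ℕ :=
  List.range k ++ u.map (letterToVar e)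

theorem getElem?_lettersAsVars (u : List (A ⊕ ℕ)) (i : ℕ) :
    (lettersAsVars e u)[i]? = if i < k then some i else u[i - k]?.map (letterToVar e) := by
  split_ifs with hi
  · rw [lettersAsVars, List.getElem?_append_left (by simpa using hi), List.getElem?_range hi]
  · rw [lettersAsVars, List.getElem?_append_right (by simpa using hi), List.getElem?_map,
      List.length_range]

theorem getD_lettersAsVars (u : List (A ⊕ ℕ)) (j : ℕ) :
    varToLetter e ((lettersAsVars e u).getD j j) =
      match varToLetter e j with
      | Sum.inl a => Sum.inl a
      | Sum.inr j' => u.getD j' (Sum.inr j') := by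
  rw [List.getD_eq_getElem?_getD, getElem?_lettersAsVars]
  by_cases hj : j < k
  · simp [hj, varToLetter]
  · have hvar : varToLetter e j = Sum.inr (j - k) := (varToLetter_eq_inr_iff e).2 (by omega)
    rw [hvar, if_neg hj]
    change _ = u.getD (j - k) _
    rw [List.getD_eq_getElem?_getD]
    cases u[j - k]? with
    | none => exact hvar
    | some s => simp

theorem substW_varToLetter_comp (W : ℕ → ℕ) (fo : ℕ → ℕ) (u : List (A ⊕ ℕ)) :
    substW (varToLetter e ∘ W) (fun j => fo (j + k)) u =
      (substE W fo (lettersAsVars e u)).map (varToLetter e) := by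
  have hlen : (lettersAsVars e u).length = u.length + k := by
    simp [lettersAsVars, Nat.add_comm]
  simp only [substW, substE, List.map_map, hlen, Function.comp_apply]
  exact List.map_congr_left fun i _ => (getD_lettersAsVars e u (W i)).symm

theorem IsOmegaVWE.varToLetter_comp {W fo : ℕ → ℕ} (hW : IsOmegaVWE W fo) :
    IsOmegaVW (varToLetter e ∘ W) (fun j => fo (j + k)) := by
  obtain ⟨hfo, hfirst, hmono⟩ := hW
  refine ⟨fun j => ?_, fun j i hi heq => ?_, fun j => ?_⟩
  · simp [varToLetter, hfo]
  · exact hfirst (j + k) i hi ((varToLetter_eq_inr_iff e).1 heq)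
  · simpa [Nat.add_right_comm] using hmono (j + k)

theorem isMVarWordE_lettersAsVars {n : ℕ} {u : List (A ⊕ ℕ)} (hu : IsNVarWord n u) :
    IsMVarWordE (n + k) (lettersAsVars e u) := by
  obtain ⟨hlt, hmem, hfirst⟩ := hu
  refine ⟨fun j hj => ?_, fun j hj => ?_, fun i _ j hij => ?_⟩
  · rcases List.mem_append.1 hj with hj | hj
    · have := List.mem_range.1 hj
      omega
    · obtain ⟨s, hs, rfl⟩ := List.mem_map.1 hj
      cases s with
      | inl a => have := (e a).isLt; simp only [letterToVar, Sum.elim_inl]; omega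
      | inr t => have := hlt t hs; simp only [letterToVar, Sum.elim_inr]; omega
  · by_cases hjk : j < k
    · exact List.mem_append_left _ (List.mem_range.2 hjk)
    · refine List.mem_append_right _ (List.mem_map.2 ⟨Sum.inr (j - k), hmem _ (by omega), ?_⟩)
      simp only [letterToVar, Sum.elim_inr]
      omega
  · rw [getElem?_lettersAsVars] at hij
    have hprefix : ∀ {i'}, i' < k → (lettersAsVars e u)[i']? = some i' := fun h => by
      rw [getElem?_lettersAsVars, if_pos h]
    split_ifs at hij with hik
    · cases hij
      exact ⟨j, j.lt_succ_self, hprefix (by omega)⟩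
    obtain ⟨s, hs, hsj⟩ := Option.map_eq_some_iff.1 hij
    by_cases hjk : j < k
    · exact ⟨j, by omega, hprefix hjk⟩
    obtain ⟨t, rfl⟩ : ∃ t, j = t + k := ⟨j - k, by omega⟩
    rw [Nat.add_right_comm, letterToVar_eq_add_iff] at hsj
    subst hsj
    obtain ⟨i₀, hi₀, ht⟩ := hfirst (i - k) (List.getElem?_eq_some_iff.1 hs).1 t hs
    refine ⟨i₀ + k, by omega, ?_⟩
    rw [getElem?_lettersAsVars, if_neg (by omega), Nat.add_sub_cancel, ht]
    rfl

end LettersAsVariables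

theorem stmt_15
    (cdrt : ∀ n ℓ : ℕ, 2 ≤ n → 2 ≤ ℓ → ∀ c : List ℕ → Fin ℓ,
      ∃ (W : ℕ → ℕ) (fo : ℕ → ℕ), IsOmegaVWE W fo ∧
        ∃ i : Fin ℓ, ∀ u : List ℕ, IsMVarWordE (n - 1) u → c (substE W fo u) = i) :
    ∀ (n k ℓ : ℕ) (A : Type) [Fintype A], Fintype.card A = k →
      ∀ c : List (A ⊕ ℕ) → Fin ℓ,
        ∃ (W : ℕ → A ⊕ ℕ) (fo : ℕ → ℕ), IsOmegaVW W fo ∧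
          ∃ i : Fin ℓ, ∀ u : List (A ⊕ ℕ), IsNVarWord n u →
            c (substW W fo u) = i := by
  intro n k ℓ A _ hcard c
  rcases Nat.eq_zero_or_pos (n + k) with hnk | hnk
  · obtain ⟨rfl, rfl⟩ : n = 0 ∧ k = 0 := by omega
    have : IsEmpty A := Fintype.card_eq_zero_iff.1 hcard
    refine ⟨Sum.inr, id, isOmegaVW_inr, c (substW Sum.inr id []), fun u hu => ?_⟩
    rw [eq_nil_of_isNVarWord_zero hu]
  · let e : A ≃ Fin k := Fintype.equivFinOfCardEq hcard
    have hdual : DualRamseyProperty (n + k + 1) ℓ :=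
      DualRamseyProperty.of_le (cdrt (n + k + 1) (ℓ + 2) (by omega) (by omega)) (by omega)
    obtain ⟨W, fo, hW, i, hi⟩ := hdual fun v => c (v.map (varToLetter e))
    refine ⟨varToLetter e ∘ W, fun j => fo (j + k), hW.varToLetter_comp e, i, fun u hu => ?_⟩
    rw [substW_varToLetter_comp]
    exact hi _ (isMVarWordE_lettersAsVars e hu)
end
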